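/- arXiv:2205.01801 — 2 statements merged into one kernel-verified Lean document; each statement's English description precedes it below -/
import Mathlib

section
/- Let M ∈ ℕ* with M ≥ ‖T°x*‖ for all x* ∈ X₀ and B ∈ ℕ* with B ≥ μ₀. Set κ(k) := 4(M+1)(B(4k+4)−1)² − 1. If x ∈ Γ_{κ(k)}, then ‖x − J_{μ₀}^S(x + μ₀ T°x)‖ ≤ 1/(k+1). -/
/-!
The selection `T°x` is the minimal-norm element of `Tx`, so an element `w ∈ Tx` whose norm is
close to `‖T°x‖` is itself close to `T°x`: this is the modulus of uniqueness
`‖w - T°x‖² ≤ ‖w‖² - ‖T°x‖²`. Hence the witness `y` of `x ∈ Γ_m` is close to `T°x`, and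
nonexpansiveness of `J^S_{μ₀}` transfers the estimate `‖x - J^S_{μ₀}(x + μ₀ y)‖ ≤ 1/(m+1)` to
`T°x` at the cost `μ₀ ‖y - T°x‖ ≤ B ‖y - T°x‖`. The value of `κ(k)` makes the sum of the errors
at most `1/(k+1)`.
-/

open scoped RealInnerProductSpace

/-- The approximation sets `Γ_m` for Moudafi's algorithm. -/
def Gamma {X : Type*} [NormedAddCommGroup X] [NormedSpace ℝ X]
    (X0 : Set X) (T : X → Set X) (Tc : X → X) (JS : ℝ → X → X) (μ : ℕ → ℝ) (m : ℕ) :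
    Set X :=
  {xs ∈ X0 | ∃ ys : X,
    |‖ys‖ - ‖Tc xs‖| ≤ 1 / ((m : ℝ) + 1) ∧
    (∃ w ∈ T xs, ‖ys - w‖ ≤ 1 / ((m : ℝ) + 1)) ∧
    ∀ i ≤ m, ‖xs - JS (μ i) (xs + μ i • ys)‖ ≤ 1 / ((m : ℝ) + 1)}

section InnerProductSpace

variable {X : Type*} [NormedAddCommGroup X] [InnerProductSpace ℝ X]

theorem norm_sub_sq_le_of_inner_sub_neg_nonpos {w z : X} (h : ⟪w - z, -z⟫ ≤ 0) :
    ‖w - z‖ ^ 2 ≤ ‖w‖ ^ 2 - ‖z‖ ^ 2 := by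
  have hw : ‖w‖ ^ 2 = ‖w - z‖ ^ 2 + 2 * ⟪w - z, z⟫ + ‖z‖ ^ 2 := by
    rw [← norm_add_sq_real, sub_add_cancel]
  rw [inner_neg_right] at h
  linarith

theorem norm_sub_le_of_norm_near_of_inner_sub_neg_nonpos {y w z : X} {M ε δ : ℝ}
    (hz : ‖z‖ ≤ M) (hε : 0 ≤ ε) (hε1 : ε ≤ 1) (hδ : 0 ≤ δ) (hεδ : 4 * ε * (M + 1) ≤ δ ^ 2)
    (hwz : ⟪w - z, -z⟫ ≤ 0) (hy : |‖y‖ - ‖z‖| ≤ ε) (hyw : ‖y - w‖ ≤ ε) :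
    ‖y - z‖ ≤ ε + δ := by
  have hw : ‖w‖ ≤ ‖z‖ + 2 * ε := by
    have := (abs_le.1 ((abs_norm_sub_norm_le y w).trans hyw)).1
    linarith [(abs_le.1 hy).2]
  have hwz_sq : ‖w - z‖ ^ 2 ≤ δ ^ 2 :=
    calc ‖w - z‖ ^ 2 ≤ ‖w‖ ^ 2 - ‖z‖ ^ 2 := norm_sub_sq_le_of_inner_sub_neg_nonpos hwz
      _ ≤ (‖z‖ + 2 * ε) ^ 2 - ‖z‖ ^ 2 := by gcongr
      _ = 4 * ε * (‖z‖ + ε) := by ring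
      _ ≤ 4 * ε * (M + 1) := by gcongr
      _ ≤ δ ^ 2 := hεδ
  calc ‖y - z‖ ≤ ‖y - w‖ + ‖w - z‖ := norm_sub_le_norm_sub_add_norm_sub y w z
    _ ≤ ε + δ := add_le_add hyw (pow_le_pow_iff_left₀ (norm_nonneg _) hδ two_ne_zero |>.1 hwz_sq)

end InnerProductSpace

theorem norm_sub_map_add_smul_le {X : Type*} [SeminormedAddCommGroup X] [NormedSpace ℝ X]
    {J : X → X} (hJ : ∀ u v, ‖J u - J v‖ ≤ ‖u - v‖) (x y z : X) (μ : ℝ) :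
    ‖x - J (x + μ • z)‖ ≤ ‖x - J (x + μ • y)‖ + |μ| * ‖y - z‖ :=
  calc ‖x - J (x + μ • z)‖ ≤ ‖x - J (x + μ • y)‖ + ‖J (x + μ • y) - J (x + μ • z)‖ :=
        norm_sub_le_norm_sub_add_norm_sub _ _ _
    _ ≤ ‖x - J (x + μ • y)‖ + ‖(x + μ • y) - (x + μ • z)‖ := by gcongr; exact hJ _ _
    _ = ‖x - J (x + μ • y)‖ + |μ| * ‖y - z‖ := by
        rw [add_sub_add_left_eq_sub, ← smul_sub, norm_smul, Real.norm_eq_abs]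

theorem error_sum_le_one_div {B c M d : ℝ} (hB : 1 ≤ B) (hc : 1 ≤ c) (hM : 0 ≤ M)
    (hd : d = 4 * B * c - 1) :
    1 / (4 * (M + 1) * d ^ 2) + B * (1 / (4 * (M + 1) * d ^ 2) + 1 / d) ≤ 1 / c := by
  have hBc : 1 ≤ B * c := one_le_mul_of_one_le_of_one_le hB hc
  have hd3 : 3 * (B * c) ≤ d := by linarith
  have hd0 : 0 < d := by linarith
  have hc0 : 0 < c := by linarith
  have hε : (1 + B) / (4 * (M + 1) * d ^ 2) ≤ 1 / (2 * c) := by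
    rw [div_le_div_iff₀ (by positivity) (by positivity)]
    nlinarith [mul_le_mul hd3 hd3 (by positivity) hd0.le, mul_le_mul_of_nonneg_left hB hc0.le]
  have hBd : B / d ≤ 1 / (2 * c) := by
    rw [div_le_div_iff₀ hd0 (by positivity)]
    linarith
  calc 1 / (4 * (M + 1) * d ^ 2) + B * (1 / (4 * (M + 1) * d ^ 2) + 1 / d)
      = (1 + B) / (4 * (M + 1) * d ^ 2) + B / d := by ring
    _ ≤ 1 / (2 * c) + 1 / (2 * c) := add_le_add hε hBd
    _ = 1 / c := by field_simp; ring

theorem natCast_kappa_add_one {M B : ℕ} (k : ℕ) (hB : 1 ≤ B) :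
    ((4 * (M + 1) * (B * (4 * k + 4) - 1) ^ 2 - 1 : ℕ) : ℝ) + 1 =
      4 * (M + 1) * ((B : ℝ) * (4 * k + 4) - 1) ^ 2 := by
  have hBk : 4 ≤ B * (4 * k + 4) := le_trans (by omega) (Nat.le_mul_of_pos_left _ hB)
  rw [Nat.cast_sub (Nat.one_le_iff_ne_zero.2 (by simp; omega)), Nat.cast_mul, Nat.cast_pow,
    Nat.cast_sub (by omega)]
  push_cast
  ring

theorem stmt10_general {X : Type*} [NormedAddCommGroup X] [InnerProductSpace ℝ X]
    (T : X → Set X) (Tc : X → X) (JS : ℝ → X → X)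
    (μ : ℕ → ℝ) (hμ : ∀ i, 0 < μ i)
    (X0 : Set X)
    (M B : ℕ) (hB1 : 1 ≤ B)
    (hM : ∀ u ∈ X0, ‖Tc u‖ ≤ (M : ℝ)) (hB : μ 0 ≤ (B : ℝ))
    (hproj : ∀ u ∈ X0, ∀ y ∈ T u, ⟪y - Tc u, -Tc u⟫ ≤ 0)
    (hJS_ne : ∀ m : ℝ, 0 < m → ∀ u v : X, ‖JS m u - JS m v‖ ≤ ‖u - v‖)
    (k : ℕ) (x : X)
    (hx : x ∈ Gamma X0 T Tc JS μ (4 * (M + 1) * (B * (4 * k + 4) - 1) ^ 2 - 1)) :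
    ‖x - JS (μ 0) (x + μ 0 • Tc x)‖ ≤ 1 / ((k : ℝ) + 1) := by
  obtain ⟨hx0, y, hy, ⟨w, hwT, hyw⟩, hyJ⟩ := hx
  rw [natCast_kappa_add_one k hB1] at hy hyw hyJ
  set d : ℝ := B * (4 * k + 4) - 1 with hd
  set ε : ℝ := 1 / (4 * (M + 1) * d ^ 2) with hε
  have hd3 : 3 ≤ d := by
    have : (1 : ℝ) ≤ B := by exact_mod_cast hB1
    nlinarith [(k.cast_nonneg : (0 : ℝ) ≤ k)]
  have hyz : ‖y - Tc x‖ ≤ ε + 1 / d := by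
    refine norm_sub_le_of_norm_near_of_inner_sub_neg_nonpos (hM x hx0) (by positivity) ?_
      (by positivity) ?_ (hproj x hx0 w hwT) hy hyw
    · rw [hε, div_le_one (by positivity)]; nlinarith
    · rw [hε]; apply le_of_eq; field_simp
  calc ‖x - JS (μ 0) (x + μ 0 • Tc x)‖
      ≤ ‖x - JS (μ 0) (x + μ 0 • y)‖ + |μ 0| * ‖y - Tc x‖ :=
        norm_sub_map_add_smul_le (hJS_ne _ (hμ 0)) _ _ _ _
    _ ≤ ε + B * (ε + 1 / d) := by
        rw [abs_of_pos (hμ 0)]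
        gcongr
        exact hyJ 0 (Nat.zero_le _)
    _ ≤ 1 / ((k : ℝ) + 1) :=
        error_sum_le_one_div (by exact_mod_cast hB1) (by simp) (by positivity) (by rw [hd]; ring)

/-- with `κ(k) := 4(M+1)(B(4k+4)−1)² − 1`, if `x ∈ Γ_{κ(k)}` then
`‖x − J^S_{μ₀}(x + μ₀ T°x)‖ ≤ 1/(k+1)`. -/
theorem stmt10 {X : Type*} [NormedAddCommGroup X] [InnerProductSpace ℝ X]
    (T S : X → Set X) (Tc : X → X) (JS : ℝ → X → X)
    (μ : ℕ → ℝ) (hμ : ∀ i, 0 < μ i)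
    (X0 : Set X)
    (M B : ℕ) (hM1 : 1 ≤ M) (hB1 : 1 ≤ B)
    (hM : ∀ u ∈ X0, ‖Tc u‖ ≤ (M : ℝ)) (hB : μ 0 ≤ (B : ℝ))
    (hsel : ∀ u ∈ X0, Tc u ∈ T u)
    (hproj : ∀ u ∈ X0, ∀ y ∈ T u, ⟪y - Tc u, -Tc u⟫ ≤ 0)
    (hJS_ne : ∀ m : ℝ, 0 < m → ∀ u v : X, ‖JS m u - JS m v‖ ≤ ‖u - v‖)
    (k : ℕ) (x : X)
    (hx : x ∈ Gamma X0 T Tc JS μ (4 * (M + 1) * (B * (4 * k + 4) - 1) ^ 2 - 1)) :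
    ‖x - JS (μ 0) (x + μ 0 • Tc x)‖ ≤ 1 / ((k : ℝ) + 1) :=
  stmt10_general T Tc JS μ hμ X0 M B hB1 hM hB hproj hJS_ne k x hx
end

section
/- Let M, B ∈ ℕ*, B' ∈ ℕ with M ≥ ‖T°x*‖ for all x* ∈ X₀ and B ≥ μ₀ ≥ 2^{−B'}, and let ϖ̂ be a modulus of uniform continuity for S w.r.t. H*. Set κ̂(k) := κ(max{ϖ̂(2k+1), 2^{B'+1}(k+1) − 1}) where κ(k) = 4(M+1)(B(4k+4)−1)² − 1. If x ∈ Γ_{κ̂(k)}, then dist(T°x, Sx) ≤ 1/(k+1). -/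
/-- `κ(k) = 4(M+1)(B(4k+4)−1)² − 1` from the previous conversion lemma. -/
def kappa (M B k : ℕ) : ℕ := 4 * (M + 1) * (B * (4 * k + 4) - 1) ^ 2 - 1

/-- with `κ̂(k) := κ(max{ϖ̂(2k+1), 2^{B'+1}(k+1) − 1})`, if `x ∈ Γ_{κ̂(k)}`
then `dist(T°x, Sx) ≤ 1/(k+1)`. -/
theorem stmt11 {X : Type*} [NormedAddCommGroup X] [InnerProductSpace ℝ X]
    (T S : X → Set X) (Tc : X → X) (JS : ℝ → X → X)
    (μ : ℕ → ℝ) (hμ : ∀ i, 0 < μ i)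
    (X0 : Set X)
    (M B : ℕ) (B' : ℕ) (hM1 : 1 ≤ M) (hB1 : 1 ≤ B)
    (hM : ∀ u ∈ X0, ‖Tc u‖ ≤ (M : ℝ))
    (hB : μ 0 ≤ (B : ℝ)) (hB' : (2 : ℝ) ^ (-(B' : ℤ)) ≤ μ 0)
    (ϖS : ℕ → ℕ)
    (hϖS : ∀ k : ℕ, ∀ u v : X, ‖u - v‖ ≤ 1 / ((ϖS k : ℝ) + 1) →
      ∀ p ∈ S u, ∃ q ∈ S v, ‖p - q‖ ≤ 1 / ((k : ℝ) + 1))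
    (hJS_ne : ∀ m : ℝ, 0 < m → ∀ u v : X, ‖JS m u - JS m v‖ ≤ ‖u - v‖)
    (hJSres : ∀ v : X, (μ 0)⁻¹ • (v - JS (μ 0) v) ∈ S (JS (μ 0) v))
    (hconv : ∀ (k : ℕ) (u : X), u ∈ Gamma X0 T Tc JS μ (kappa M B k) →
      ‖u - JS (μ 0) (u + μ 0 • Tc u)‖ ≤ 1 / ((k : ℝ) + 1))
    (k : ℕ) (x : X)
    (hx : x ∈ Gamma X0 T Tc JS μ
      (kappa M B (max (ϖS (2 * k + 1)) (2 ^ (B' + 1) * (k + 1) - 1)))) :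
    Metric.infDist (Tc x) (S x) ≤ 1 / ((k : ℝ) + 1) := by
  set K := max (ϖS (2 * k + 1)) (2 ^ (B' + 1) * (k + 1) - 1) with hKdef
  have hμ0 : (0:ℝ) < μ 0 := hμ 0
  have hxy : ‖x - JS (μ 0) (x + μ 0 • Tc x)‖ ≤ 1 / ((K : ℝ) + 1) := hconv K x hx
  set y := JS (μ 0) (x + μ 0 • Tc x) with hy
  have hpS : (μ 0)⁻¹ • ((x + μ 0 • Tc x) - y) ∈ S y := hJSres _
  set p := (μ 0)⁻¹ • ((x + μ 0 • Tc x) - y) with hp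
  have hKpos : (0:ℝ) < (K:ℝ) + 1 := by positivity
  -- K+1 ≥ ϖS(2k+1)+1
  have h1 : ((ϖS (2 * k + 1) : ℝ)) + 1 ≤ (K:ℝ) + 1 := by
    have := le_max_left (ϖS (2 * k + 1)) (2 ^ (B' + 1) * (k + 1) - 1)
    have : (ϖS (2 * k + 1) : ℝ) ≤ (K:ℝ) := by exact_mod_cast this
    linarith
  -- K+1 ≥ 2^{B'+1}(k+1)
  have h2 : (2:ℝ) ^ (B' + 1) * ((k:ℝ) + 1) ≤ (K:ℝ) + 1 := by
    have hn : 2 ^ (B' + 1) * (k + 1) ≤ K + 1 := by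
      have hle : 2 ^ (B' + 1) * (k + 1) - 1 ≤ K := le_max_right _ _
      have hpos : 1 ≤ 2 ^ (B' + 1) * (k + 1) := Nat.one_le_iff_ne_zero.mpr (by positivity)
      omega
    calc (2:ℝ) ^ (B' + 1) * ((k:ℝ) + 1) = ((2 ^ (B' + 1) * (k + 1) : ℕ) : ℝ) := by push_cast; ring
      _ ≤ ((K + 1 : ℕ) : ℝ) := by exact_mod_cast hn
      _ = (K:ℝ) + 1 := by push_cast; ring
  -- get q ∈ S x
  have hyx : ‖y - x‖ ≤ 1 / ((ϖS (2 * k + 1) : ℝ) + 1) := by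
    rw [norm_sub_rev]
    refine hxy.trans ?_
    apply one_div_le_one_div_of_le (by positivity) h1
  obtain ⟨q, hqSx, hpq⟩ := hϖS (2 * k + 1) y x hyx p hpS
  have hSxne : (S x).Nonempty := ⟨q, hqSx⟩
  -- ‖Tc x - p‖ bound
  have hptc : p - Tc x = (μ 0)⁻¹ • (x - y) := by
    rw [hp]
    have : (x + μ 0 • Tc x) - y = (x - y) + μ 0 • Tc x := by abel
    rw [this, smul_add, smul_smul, inv_mul_cancel₀ hμ0.ne', one_smul]
    abel
  have hμinv : (μ 0)⁻¹ ≤ (2:ℝ) ^ (B' : ℕ) := by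
    have h2B : (2:ℝ) ^ (-(B' : ℤ)) = ((2:ℝ) ^ (B' : ℕ))⁻¹ := by
      rw [zpow_neg, zpow_natCast]
    have hpos : (0:ℝ) < (2:ℝ) ^ (B' : ℕ) := by positivity
    rw [h2B] at hB'
    calc (μ 0)⁻¹ ≤ ((2:ℝ) ^ (B':ℕ))⁻¹⁻¹ := by
          apply inv_anti₀ (by positivity) hB'
      _ = (2:ℝ) ^ (B':ℕ) := inv_inv _
  have hbound1 : ‖Tc x - p‖ ≤ 1 / (2 * ((k:ℝ) + 1)) := by
    rw [norm_sub_rev, hptc, norm_smul, Real.norm_eq_abs, abs_of_pos (by positivity)]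
    calc (μ 0)⁻¹ * ‖x - y‖ ≤ (2:ℝ) ^ (B':ℕ) * (1 / ((K:ℝ) + 1)) := by
          apply mul_le_mul hμinv hxy (norm_nonneg _) (by positivity)
      _ ≤ 1 / (2 * ((k:ℝ) + 1)) := by
          rw [mul_one_div, div_le_div_iff₀ hKpos (by positivity)]
          have : (2:ℝ) ^ (B' + 1) = 2 * (2:ℝ) ^ (B':ℕ) := by ring
          nlinarith [h2]
  have hbound2 : ‖p - q‖ ≤ 1 / (2 * ((k:ℝ) + 1)) := by
    refine hpq.trans (le_of_eq ?_)
    push_cast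
    ring_nf
  calc Metric.infDist (Tc x) (S x) ≤ dist (Tc x) q := Metric.infDist_le_dist_of_mem hqSx
    _ = ‖Tc x - q‖ := by rw [dist_eq_norm]
    _ ≤ ‖Tc x - p‖ + ‖p - q‖ := norm_sub_le_norm_sub_add_norm_sub _ _ _
    _ ≤ 1 / (2 * ((k:ℝ) + 1)) + 1 / (2 * ((k:ℝ) + 1)) := add_le_add hbound1 hbound2
    _ = 1 / ((k:ℝ) + 1) := by rw [← add_div, div_eq_div_iff (by positivity) (by positivity)]; ring
end
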